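/- Let F : ℝ^d → ℝ be M-smooth, η = 1/M, and x_{t+1} = x_t - η·g. Suppose ‖∇F(x_t)‖ ≥ γ and ‖g - ∇F(x_t)‖ ≤ γ/4 for some γ > 0. Then F(x_{t+1}) - F(x_t) ≤ -(η/16)·‖g‖². -/

import Mathlib

/-!
By the descent lemma for an `M`-smooth function, the step `x - η • g` with `η = 1 / M` satisfies
`F (x - η • g) - F x ≤ -η ⟪∇F x, g⟫ + (η / 2) ‖g‖²`. Since `‖g - ∇F x‖ ≤ γ / 4 ≤ ‖∇F x‖ / 4`,
the estimate `g` has norm at least `3 ‖g - ∇F x‖`, so `⟪∇F x, g⟫ ≥ (2 / 3) ‖g‖²` and the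
decrease is at least `(η / 6) ‖g‖²`.
-/

open RealInnerProductSpace Set

variable {E : Type*} [NormedAddCommGroup E] [InnerProductSpace ℝ E]

theorem one_sub_mul_sq_norm_le_inner {v g : E} {ε : ℝ} (h : ‖v - g‖ ≤ ε * ‖g‖) :
    (1 - ε) * ‖g‖ ^ 2 ≤ ⟪v, g⟫ := by
  calc (1 - ε) * ‖g‖ ^ 2 ≤ ‖g‖ ^ 2 - ‖v - g‖ * ‖g‖ := by nlinarith [norm_nonneg g]
    _ ≤ ‖g‖ ^ 2 + ⟪v - g, g⟫ := by linarith [neg_le_of_abs_le (abs_real_inner_le_norm (v - g) g)]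
    _ = ⟪v, g⟫ := by rw [inner_sub_left, real_inner_self_eq_norm_sq]; ring

variable [CompleteSpace E]

theorem HasGradientAt.hasDerivAt_comp_add_smul {f : E → ℝ} {f' x v : E} {t : ℝ}
    (hf : HasGradientAt f f' (x + t • v)) :
    HasDerivAt (fun s : ℝ => f (x + s • v)) ⟪f', v⟫ t := by
  have hline : HasDerivAt (fun s : ℝ => x + s • v) v t := by
    simpa using ((hasDerivAt_id t).smul_const v).const_add x
  have := hf.hasFDerivAt.comp_hasDerivAt t hline
  simp only [InnerProductSpace.toDual_apply_apply] at this
  exact this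

theorem le_add_inner_add_of_norm_gradient_sub_le {f : E → ℝ} {f' : E → E} {M : ℝ}
    (hf : ∀ x, HasGradientAt f (f' x) x) (hLip : ∀ x y, ‖f' x - f' y‖ ≤ M * ‖x - y‖)
    (x v : E) : f (x + v) ≤ f x + ⟪f' x, v⟫ + M / 2 * ‖v‖ ^ 2 := by
  set bound : ℝ → ℝ := fun t => f x + t * ⟪f' x, v⟫ + M / 2 * t ^ 2 * ‖v‖ ^ 2
  have hf_line (t : ℝ) : HasDerivAt (fun s : ℝ => f (x + s • v)) ⟪f' (x + t • v), v⟫ t :=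
    (hf _).hasDerivAt_comp_add_smul
  have hbound (t : ℝ) : HasDerivAt bound (⟪f' x, v⟫ + M * t * ‖v‖ ^ 2) t := by
    have := (((hasDerivAt_id t).mul_const ⟪f' x, v⟫).const_add (f x)).add
      (((hasDerivAt_pow 2 t).const_mul (M / 2)).mul_const (‖v‖ ^ 2))
    exact this.congr_deriv (by push_cast; ring)
  have hslope : ∀ t ∈ Ico (0 : ℝ) 1, ⟪f' (x + t • v), v⟫ ≤ ⟪f' x, v⟫ + M * t * ‖v‖ ^ 2 := by
    rintro t ⟨ht, -⟩
    calc ⟪f' (x + t • v), v⟫ = ⟪f' x, v⟫ + ⟪f' (x + t • v) - f' x, v⟫ := by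
          rw [inner_sub_left]; ring
      _ ≤ ⟪f' x, v⟫ + ‖f' (x + t • v) - f' x‖ * ‖v‖ := by
          gcongr; exact real_inner_le_norm _ _
      _ ≤ ⟪f' x, v⟫ + M * ‖x + t • v - x‖ * ‖v‖ := by gcongr; exact hLip _ _
      _ = ⟪f' x, v⟫ + M * t * ‖v‖ ^ 2 := by
          rw [add_sub_cancel_left, norm_smul, Real.norm_of_nonneg ht]; ring
  have key := image_le_of_deriv_right_le_deriv_boundary
    (fun t _ => (hf_line t).continuousAt.continuousWithinAt)
    (fun t _ => (hf_line t).hasDerivWithinAt) (by simp [bound])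
    (fun t _ => (hbound t).continuousAt.continuousWithinAt)
    (fun t _ => (hbound t).hasDerivWithinAt) hslope (right_mem_Icc.2 zero_le_one)
  simpa [bound] using key

theorem stmt_1_general {d : ℕ} (F : EuclideanSpace ℝ (Fin d) → ℝ)
    (gradF : EuclideanSpace ℝ (Fin d) → EuclideanSpace ℝ (Fin d))
    (M η γ : ℝ) (hM : 0 < M) (hη : η = 1 / M)
    (hgrad : ∀ x, HasGradientAt F (gradF x) x)
    (hsmooth : ∀ x y, ‖gradF x - gradF y‖ ≤ M * ‖x - y‖)
    (x g : EuclideanSpace ℝ (Fin d))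
    (hlarge : γ ≤ ‖gradF x‖) (hacc : ‖g - gradF x‖ ≤ γ / 4) :
    F (x - η • g) - F x ≤ -(η / 16) * ‖g‖ ^ 2 := by
  have hη_pos : 0 < η := by rw [hη]; positivity
  have hMη : M * η = 1 := by rw [hη]; field_simp
  have hclose : ‖gradF x - g‖ ≤ 1 / 3 * ‖g‖ := by
    rw [norm_sub_rev] at hacc ⊢
    linarith [norm_sub_norm_le (gradF x) g, norm_sub_rev (gradF x) g]
  have hinner := one_sub_mul_sq_norm_le_inner hclose
  have hstep := le_add_inner_add_of_norm_gradient_sub_le hgrad hsmooth x (-(η • g))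
  rw [← sub_eq_add_neg, inner_neg_right, real_inner_smul_right, norm_neg, norm_smul,
    Real.norm_of_nonneg hη_pos.le] at hstep
  calc F (x - η • g) - F x ≤ -(η * ⟪gradF x, g⟫) + M * η * (η / 2) * ‖g‖ ^ 2 := by linarith
    _ ≤ -(η * ((1 - 1 / 3) * ‖g‖ ^ 2)) + 1 * (η / 2) * ‖g‖ ^ 2 := by rw [hMη]; gcongr
    _ ≤ -(η / 16) * ‖g‖ ^ 2 := by nlinarith [sq_nonneg ‖g‖]

theorem stmt_1 {d : ℕ} (F : EuclideanSpace ℝ (Fin d) → ℝ)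
    (gradF : EuclideanSpace ℝ (Fin d) → EuclideanSpace ℝ (Fin d))
    (M η γ : ℝ) (hM : 0 < M) (hη : η = 1 / M) (hγ : 0 < γ)
    (hgrad : ∀ x, HasGradientAt F (gradF x) x)
    (hsmooth : ∀ x y, ‖gradF x - gradF y‖ ≤ M * ‖x - y‖)
    (x g : EuclideanSpace ℝ (Fin d))
    (hlarge : γ ≤ ‖gradF x‖) (hacc : ‖g - gradF x‖ ≤ γ / 4) :
    F (x - η • g) - F x ≤ -(η / 16) * ‖g‖ ^ 2 :=
  stmt_1_general F gradF M η γ hM hη hgrad hsmooth x g hlarge hacc
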